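/- Let X be a δ-regular set with constant C_R on scales α₀ to α₁. Let I be an interval and ρ > 0 satisfy α₀ ≤ ρ ≤ |I| ≤ α₁. Then there exists a nonoverlapping collection J of at most 12 C_R² (|I|/ρ)^δ intervals, each of size ρ and each of the form ρ[j, j+1] with j ∈ ℤ, such that X ∩ I ⊂ ⋃_{J ∈ 𝒥} J. -/

import Mathlib

/-!
Cover `X ∩ [a, b]` by the grid cells `ρ[j, j+1]` that meet it, and pick a point of `X ∩ [a, b]` in
each of them. Cells whose indices agree mod 3 and differ are at least `2ρ` apart, so the balls of
radius `ρ/2` around their chosen points are disjoint. Each ball has measure at least `C_R⁻¹ ρ^δ`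
by lower regularity, and all of them lie in `[a - ρ, b + ρ]`, whose measure is at most
`3 C_R |I|^δ` by upper regularity. Hence each residue class has at most `3 C_R² (|I|/ρ)^δ` cells.
-/

open MeasureTheory

/-- A nonempty closed set `X ⊆ ℝ` is `δ`-regular with constant `C_R ≥ 1` on scales `α₀` to `α₁`. -/
def IsDeltaRegular (X : Set ℝ) (δ C_R α₀ α₁ : ℝ) : Prop :=
  X.Nonempty ∧ IsClosed X ∧ 0 ≤ δ ∧ δ ≤ 1 ∧ 1 ≤ C_R ∧
  ∃ μ : Measure ℝ,
    μ Xᶜ = 0 ∧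
    (∀ a b : ℝ, a ≤ b → α₀ ≤ b - a → b - a ≤ α₁ →
      μ (Set.Icc a b) ≤ ENNReal.ofReal (C_R * (b - a) ^ δ)) ∧
    (∀ a b : ℝ, a ≤ b → α₀ ≤ b - a → b - a ≤ α₁ → (a + b) / 2 ∈ X →
      ENNReal.ofReal (C_R⁻¹ * (b - a) ^ δ) ≤ μ (Set.Icc a b))

open Set Metric

theorem card_mul_le_measure_of_pairwiseDisjoint {ι α : Type*} [MeasurableSpace α]
    {μ : Measure α} {S : Finset ι} {s : ι → Set α} {t : Set α} {m : ENNReal}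
    (hd : (S : Set ι).PairwiseDisjoint s) (hs : ∀ i ∈ S, MeasurableSet (s i))
    (hm : ∀ i ∈ S, m ≤ μ (s i)) (hst : ∀ i ∈ S, s i ⊆ t) :
    S.card * m ≤ μ t :=
  calc S.card * m = ∑ _i ∈ S, m := by rw [Finset.sum_const, nsmul_eq_mul]
    _ ≤ ∑ i ∈ S, μ (s i) := Finset.sum_le_sum hm
    _ = μ (⋃ i ∈ S, s i) := (measure_biUnion_finset hd hs).symm
    _ ≤ μ t := measure_mono (iUnion₂_subset hst)

theorem measure_Icc_sub_add_le {μ : Measure ℝ} {C δ α₀ α₁ a b ρ : ℝ}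
    (hup : ∀ a b : ℝ, a ≤ b → α₀ ≤ b - a → b - a ≤ α₁ →
      μ (Icc a b) ≤ ENNReal.ofReal (C * (b - a) ^ δ))
    (hC : 0 ≤ C) (hδ : 0 ≤ δ) (hρ : 0 ≤ ρ) (h₁ : α₀ ≤ ρ) (h₂ : ρ ≤ b - a) (h₃ : b - a ≤ α₁) :
    μ (Icc (a - ρ) (b + ρ)) ≤ ENNReal.ofReal (3 * C * (b - a) ^ δ) := by
  have hside : ∀ c, μ (Icc (c - ρ) c) ≤ ENNReal.ofReal (C * (b - a) ^ δ) ∧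
      μ (Icc c (c + ρ)) ≤ ENNReal.ofReal (C * (b - a) ^ δ) := fun c => by
    have hle : ENNReal.ofReal (C * ρ ^ δ) ≤ ENNReal.ofReal (C * (b - a) ^ δ) := by
      gcongr
    constructor
    · have h := hup (c - ρ) c (by linarith) (by linarith) (by linarith)
      rw [sub_sub_cancel] at h
      exact h.trans hle
    · have h := hup c (c + ρ) (by linarith) (by linarith) (by linarith)
      rw [add_sub_cancel_left] at h
      exact h.trans hle
  have hsplit : Icc (a - ρ) (b + ρ) = Icc (a - ρ) a ∪ Icc a b ∪ Icc b (b + ρ) := by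
    rw [Icc_union_Icc_eq_Icc (by linarith) (by linarith),
      Icc_union_Icc_eq_Icc (by linarith) (by linarith)]
  have hnn : 0 ≤ C * (b - a) ^ δ := mul_nonneg hC (Real.rpow_nonneg (by linarith) _)
  calc μ (Icc (a - ρ) (b + ρ))
      ≤ μ (Icc (a - ρ) a) + μ (Icc a b) + μ (Icc b (b + ρ)) := by
        rw [hsplit]
        exact (measure_union_le _ _).trans (add_le_add_left (measure_union_le _ _) _)
    _ ≤ ENNReal.ofReal (C * (b - a) ^ δ) + ENNReal.ofReal (C * (b - a) ^ δ)
          + ENNReal.ofReal (C * (b - a) ^ δ) :=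
        add_le_add (add_le_add (hside a).1 (hup a b (by linarith) (by linarith) h₃)) (hside b).2
    _ = ENNReal.ofReal (3 * C * (b - a) ^ δ) := by
        rw [← ENNReal.ofReal_add hnn hnn, ← ENNReal.ofReal_add (add_nonneg hnn hnn) hnn]
        ring_nf

theorem IsDeltaRegular.card_le_of_separated {X : Set ℝ} {δ C α₀ α₁ a b ρ : ℝ} {ι : Type*}
    (hreg : IsDeltaRegular X δ C α₀ α₁) {S : Finset ι} {x : ι → ℝ}
    (hx : ∀ i ∈ S, x i ∈ X ∩ Icc a b) (hsep : (S : Set ι).Pairwise fun i j => ρ < dist (x i) (x j))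
    (hρ : 0 < ρ) (h₁ : α₀ ≤ ρ) (h₂ : ρ ≤ b - a) (h₃ : b - a ≤ α₁) :
    (S.card : ℝ) ≤ 3 * C ^ 2 * ((b - a) / ρ) ^ δ := by
  obtain ⟨-, -, hδ, -, hC, μ, -, hup, hlow⟩ := hreg
  have hCpos : 0 < C := by linarith
  have hball : ∀ i ∈ S, ENNReal.ofReal (C⁻¹ * ρ ^ δ) ≤ μ (closedBall (x i) (ρ / 2)) := by
    intro i hi
    have h := hlow (x i - ρ / 2) (x i + ρ / 2) (by linarith) (by linarith) (by linarith)
      (by ring_nf; exact (hx i hi).1)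
    rwa [show x i + ρ / 2 - (x i - ρ / 2) = ρ by ring, ← Real.closedBall_eq_Icc] at h
  have hdisj : (S : Set ι).PairwiseDisjoint fun i => closedBall (x i) (ρ / 2) :=
    fun i hi j hj hij => closedBall_disjoint_closedBall (by linarith [hsep hi hj hij])
  have hsub : ∀ i ∈ S, closedBall (x i) (ρ / 2) ⊆ Icc (a - ρ) (b + ρ) := by
    intro i hi
    rw [Real.closedBall_eq_Icc]
    exact Icc_subset_Icc (by linarith [(hx i hi).2.1]) (by linarith [(hx i hi).2.2])
  have key := (card_mul_le_measure_of_pairwiseDisjoint hdisj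
    (fun _ _ => measurableSet_closedBall) hball hsub).trans
    (measure_Icc_sub_add_le hup hCpos.le hδ hρ.le h₁ h₂ h₃)
  have hba : 0 ≤ b - a := by linarith
  rw [← ENNReal.ofReal_natCast, ← ENNReal.ofReal_mul (Nat.cast_nonneg _),
    ENNReal.ofReal_le_ofReal_iff (by have := Real.rpow_nonneg hba δ; positivity)] at key
  rw [Real.div_rpow hba hρ.le,
    show 3 * C ^ 2 * ((b - a) ^ δ / ρ ^ δ) = 3 * C * (b - a) ^ δ / (C⁻¹ * ρ ^ δ) by
      field_simp, le_div_iff₀ (mul_pos (inv_pos.2 hCpos) (Real.rpow_pos_of_pos hρ δ))]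
  exact key

theorem mem_Icc_mul_floor_div {ρ : ℝ} (hρ : 0 < ρ) (x : ℝ) :
    x ∈ Icc (ρ * ⌊x / ρ⌋) (ρ * (⌊x / ρ⌋ + 1)) :=
  ⟨(le_div_iff₀' hρ).1 (Int.floor_le _), (div_le_iff₀' hρ).1 (Int.lt_floor_add_one _).le⟩

theorem lt_dist_of_mem_Icc_mul_of_emod_eq {ρ x y : ℝ} {j k : ℤ} (hρ : 0 < ρ)
    (hx : x ∈ Icc (ρ * j) (ρ * (j + 1))) (hy : y ∈ Icc (ρ * k) (ρ * (k + 1)))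
    (hmod : j % 3 = k % 3) (hne : j ≠ k) :
    ρ < dist x y := by
  have hfar : ∀ {x y : ℝ} {j k : ℤ}, x ∈ Icc (ρ * j) (ρ * (j + 1)) →
      y ∈ Icc (ρ * k) (ρ * (k + 1)) → j + 3 ≤ k → ρ < dist x y := by
    intro x y j k hx hy hjk
    have hjk' : (j : ℝ) + 3 ≤ k := by exact_mod_cast hjk
    rw [Real.dist_eq, abs_sub_comm]
    exact lt_of_lt_of_le (by nlinarith [hx.2, hy.1]) (le_abs_self _)
  rcases hne.lt_or_gt with hlt | hlt
  · exact hfar hx hy (by omega)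
  · exact dist_comm x y ▸ hfar hy hx (by omega)

theorem Finset.card_le_mul_of_card_filter_emod_le {J : Finset ℤ} {n : ℤ} {K : ℝ} (hn : 0 < n)
    (h : ∀ r, ((J.filter (· % n = r)).card : ℝ) ≤ K) :
    (J.card : ℝ) ≤ n * K := by
  classical
  have hmaps : MapsTo (· % n) (J : Set ℤ) (Finset.Ico 0 n : Finset ℤ) := fun j _ => by
    simp only [Finset.coe_Ico]
    exact ⟨Int.emod_nonneg _ hn.ne', Int.emod_lt_of_pos _ hn⟩
  calc (J.card : ℝ) = ∑ r ∈ Finset.Ico 0 n, ((J.filter (· % n = r)).card : ℝ) := by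
        exact_mod_cast Finset.card_eq_sum_card_fiberwise hmaps
    _ ≤ ∑ _r ∈ Finset.Ico 0 n, K := Finset.sum_le_sum fun r _ => h r
    _ = n * K := by
        rw [Finset.sum_const, Int.card_Ico, sub_zero, nsmul_eq_mul, ← Int.cast_natCast,
          Int.toNat_of_nonneg hn.le]

theorem covering_of_regular_general (X : Set ℝ) (δ C_R α₀ α₁ a b ρ : ℝ)
    (hreg : IsDeltaRegular X δ C_R α₀ α₁) (hρ : 0 < ρ)
    (h₁ : α₀ ≤ ρ) (h₂ : ρ ≤ b - a) (h₃ : b - a ≤ α₁) :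
    ∃ J : Finset ℤ, (J.card : ℝ) ≤ 12 * C_R ^ 2 * ((b - a) / ρ) ^ δ ∧
      X ∩ Set.Icc a b ⊆ ⋃ j ∈ J, Set.Icc (ρ * j) (ρ * (j + 1)) := by
  classical
  set J := (Finset.Icc ⌊a / ρ⌋ ⌊b / ρ⌋).filter
    fun j : ℤ => (X ∩ Icc a b ∩ Icc (ρ * j) (ρ * (j + 1))).Nonempty
  choose! x hx using fun j (hj : j ∈ J) => (Finset.mem_filter.1 hj).2
  refine ⟨J, ?_, fun y hy => mem_biUnion ?_ (mem_Icc_mul_floor_div hρ y)⟩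
  · have hclass (r : ℤ) :
        ((J.filter (· % 3 = r)).card : ℝ) ≤ 3 * C_R ^ 2 * ((b - a) / ρ) ^ δ := by
      have hmem {j : ℤ} (hj : j ∈ J.filter (· % 3 = r)) := Finset.mem_filter.1 hj
      exact hreg.card_le_of_separated (fun j hj => (hx j (hmem hj).1).1)
        (fun j hj k hk hjk => lt_dist_of_mem_Icc_mul_of_emod_eq hρ (hx j (hmem hj).1).2
          (hx k (hmem hk).1).2 ((hmem hj).2.trans (hmem hk).2.symm) hjk) hρ h₁ h₂ h₃
    have hnn : 0 ≤ C_R ^ 2 * ((b - a) / ρ) ^ δ :=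
      mul_nonneg (sq_nonneg _) (Real.rpow_nonneg (div_nonneg (by linarith) hρ.le) _)
    have hcard := Finset.card_le_mul_of_card_filter_emod_le (by norm_num) hclass
    push_cast at hcard
    linarith
  · have hfloor : ⌊y / ρ⌋ ∈ Finset.Icc ⌊a / ρ⌋ ⌊b / ρ⌋ :=
      Finset.mem_Icc.2 ⟨Int.floor_le_floor (by gcongr; exact hy.2.1),
        Int.floor_le_floor (by gcongr; exact hy.2.2)⟩
    exact Finset.mem_filter.2 ⟨hfloor, y, hy, mem_Icc_mul_floor_div hρ y⟩

/-- Covering lemma for regular sets: `X ∩ I` is covered by at most `12 C_R² (|I|/ρ)^δ`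
intervals of the form `ρ[j, j+1]`, `j ∈ ℤ` (these are automatically nonoverlapping). -/
theorem covering_of_regular (X : Set ℝ) (δ C_R α₀ α₁ a b ρ : ℝ)
    (hreg : IsDeltaRegular X δ C_R α₀ α₁) (hab : a ≤ b) (hρ : 0 < ρ)
    (h₁ : α₀ ≤ ρ) (h₂ : ρ ≤ b - a) (h₃ : b - a ≤ α₁) :
    ∃ J : Finset ℤ, (J.card : ℝ) ≤ 12 * C_R ^ 2 * ((b - a) / ρ) ^ δ ∧
      X ∩ Set.Icc a b ⊆ ⋃ j ∈ J, Set.Icc (ρ * j) (ρ * (j + 1)) :=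
  covering_of_regular_general X δ C_R α₀ α₁ a b ρ hreg hρ h₁ h₂ h₃
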